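/- Let k ≥ 1 and consider the hierarchical graph H_{2,…,2} (k copies of 2), whose vertices are binary strings of length k. For a vertex x, let x̄ denote the binary string obtained from x by interchanging 0's and 1's. If x = x_1…x_k is a vertex with x_k = 1, then the eccentricity of x equals alt(x̄) + k. -/

import Mathlib

/-- The value of the `j`-th coordinate (0-indexed) of the string `x`,
extended by `0` for positions `≥ k`. -/
def extVal (n : ℕ → ℕ) (k : ℕ) (x : ∀ i : Fin k, Fin (n i)) (j : ℕ) : ℕ :=
  if h : j < k then (x ⟨j, h⟩).val else 0

/-- The alternating number of the string `x`: the number of (0-indexed) positions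
`j ∈ {0,…,k-1}` such that exactly one of `x_j`, `x_{j+1}` is zero (with `x_k := 0`). -/
def altNum (n : ℕ → ℕ) (k : ℕ) (x : ∀ i : Fin k, Fin (n i)) : ℕ :=
  ((Finset.range k).filter (fun j =>
    (extVal n k x j = 0 ∧ extVal n k x (j + 1) ≠ 0) ∨
    (extVal n k x j ≠ 0 ∧ extVal n k x (j + 1) = 0))).card

/-- Adjacency in the hierarchical graph `H_{n_1,…,n_k}` (coordinates 0-indexed):
rule (A1): the two strings differ exactly in the first coordinate;
rule (A2): for some `j`, one string has its first `j+1` coordinates all zero, the other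
has its first `j+1` coordinates all nonzero, and they agree on the remaining coordinates;
rule (A3): for some `m ≥ 1`, both strings have their first `m` coordinates zero, their
`m`-th coordinates are distinct and nonzero, and they agree beyond position `m`. -/
def HierAdj (n : ℕ → ℕ) (k : ℕ) (x y : ∀ i : Fin k, Fin (n i)) : Prop :=
  x ≠ y ∧
    ((∀ i : Fin k, 0 < i.val → x i = y i) ∨
     (∃ j : Fin k,
       (((∀ i : Fin k, i.val ≤ j.val → (x i).val = 0) ∧
         (∀ i : Fin k, i.val ≤ j.val → (y i).val ≠ 0)) ∨
        ((∀ i : Fin k, i.val ≤ j.val → (y i).val = 0) ∧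
         (∀ i : Fin k, i.val ≤ j.val → (x i).val ≠ 0))) ∧
       (∀ i : Fin k, j.val < i.val → x i = y i)) ∨
     (∃ m : Fin k, 0 < m.val ∧
       (∀ i : Fin k, i.val < m.val → (x i).val = 0 ∧ (y i).val = 0) ∧
       (x m).val ≠ 0 ∧ (y m).val ≠ 0 ∧ x m ≠ y m ∧
       (∀ i : Fin k, m.val < i.val → x i = y i)))

/-- The hierarchical graph `H_{n_1,…,n_k}` as a simple graph on the strings
`x = x_1…x_k` with `x_i ∈ Z_{n_i}`. -/
def hierGraph (n : ℕ → ℕ) (k : ℕ) : SimpleGraph (∀ i : Fin k, Fin (n i)) where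
  Adj := HierAdj n k
  symm := ⟨by
    rintro x y ⟨hne, h⟩
    refine ⟨hne.symm, ?_⟩
    rcases h with h | ⟨j, hj, hag⟩ | ⟨m, hm, hpre, hx, hy, hxy, hs⟩
    · exact Or.inl fun i hi => (h i hi).symm
    · exact Or.inr (Or.inl ⟨j, hj.symm, fun i hi => (hag i hi).symm⟩)
    · exact Or.inr (Or.inr ⟨m, hm, fun i hi => ⟨(hpre i hi).2, (hpre i hi).1⟩,
        hy, hx, hxy.symm, fun i hi => (hs i hi).symm⟩)⟩
  loopless := ⟨fun x h => h.1 rfl⟩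

/-!
An edge of `H_{2,…,2}` replaces a constant block `x_1 … x_m` by the complementary constant
block. Making `x` constant costs one flip per change of letter among `x_1 … x_k`, that is
`alt(x̄)` flips when `x_k = 1`; so any `y` is reached by making `x` constant, flipping the whole
word if needed, and undoing the at most `k - 1` flips that make `y` constant. For the lower
bound, the number `altDist` of flips this strategy needs to reach the alternating word ending in
`0` drops by at most one along an edge, and it equals `alt(x̄) + k` at `x`.
-/
theorem SimpleGraph.Walk.apply_le_apply_add_length {V : Type*} {G : SimpleGraph V} {f : V → ℕ}
    (hf : ∀ u v, G.Adj u v → f u ≤ f v + 1) {u v : V} (p : G.Walk u v) :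
    f u ≤ f v + p.length := by
  induction p with
  | nil => simp
  | cons h _ ih =>
    have := hf _ _ h
    rw [SimpleGraph.Walk.length_cons]
    omega

theorem SimpleGraph.Reachable.apply_le_apply_add_dist {V : Type*} {G : SimpleGraph V}
    {f : V → ℕ} (hf : ∀ u v, G.Adj u v → f u ≤ f v + 1) {u v : V} (h : G.Reachable u v) :
    f u ≤ f v + G.dist u v := by
  obtain ⟨p, hp⟩ := h.exists_walk_length_eq_dist
  exact hp ▸ p.apply_le_apply_add_length hf

theorem Fin.ne_one_sub_self (a : Fin 2) : a ≠ 1 - a := by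
  revert a; decide

theorem Fin.eq_one_sub_of_ne {a c : Fin 2} (h : a ≠ c) : a = 1 - c := by
  revert a c; decide

namespace BinaryHierGraph

open SimpleGraph Finset

section Sequences

variable {α : Type*} {s t : ℕ → α} {m j : ℕ}

def IsPrefixFlip (m : ℕ) (s t : ℕ → α) : Prop :=
  (∀ i ≤ m, s i = s m ∧ t i = t m) ∧ s m ≠ t m ∧ ∀ i, m < i → s i = t i

theorem isPrefixFlip_of_const {c d : α} (hs : ∀ i ≤ m, s i = c) (ht : ∀ i ≤ m, t i = d)
    (hcd : c ≠ d) (hag : ∀ i, m < i → s i = t i) : IsPrefixFlip m s t := by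
  refine ⟨fun i hi => ?_, by rwa [hs m le_rfl, ht m le_rfl], hag⟩
  rw [hs i hi, ht i hi, hs m le_rfl, ht m le_rfl]
  exact ⟨rfl, rfl⟩

variable [DecidableEq α]

def changes (s : ℕ → α) (j : ℕ) : ℕ := #{i ∈ range j | s i ≠ s (i + 1)}

theorem changes_le (s : ℕ → α) (j : ℕ) : changes s j ≤ j :=
  (card_filter_le _ _).trans (card_range j).le

theorem changes_succ (s : ℕ → α) (j : ℕ) :
    changes s (j + 1) = changes s j + if s j = s (j + 1) then 0 else 1 := by
  unfold changes
  by_cases h : s j = s (j + 1)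
  · rw [range_add_one, filter_insert, if_neg (not_not.mpr h), if_pos h, add_zero]
  · rw [range_add_one, filter_insert, if_pos h, if_neg h, card_insert_of_notMem (by simp)]

theorem changes_eq_zero_of_const {d : α} (h : ∀ i ≤ j, s i = d) : changes s j = 0 := by
  refine card_eq_zero.mpr (filter_eq_empty_iff.mpr fun i hi => ?_)
  rw [mem_range] at hi
  rw [h i hi.le, h (i + 1) hi, not_not]

theorem changes_le_changes_add_one (h : IsPrefixFlip m s t) :
    changes s j ≤ changes t j + 1 := by
  have hsub : {i ∈ range j | s i ≠ s (i + 1)} ⊆ insert m {i ∈ range j | t i ≠ t (i + 1)} := by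
    intro i
    simp only [mem_filter, mem_range, mem_insert]
    rintro ⟨hij, hne⟩
    rcases lt_trichotomy i m with hi | rfl | hi
    · exact absurd ((h.1 i hi.le).1.trans (h.1 (i + 1) hi).1.symm) hne
    · exact Or.inl rfl
    · exact Or.inr ⟨hij, by rwa [← h.2.2 i hi, ← h.2.2 (i + 1) (by omega)]⟩
  exact (card_le_card hsub).trans (card_insert_le _ _)

end Sequences

section AltDist

variable {s t : ℕ → Fin 2} {m j : ℕ}

/-- `altDist s j c` counts the prefix flips that turn `s 0, …, s (j - 1)` into the alternating
word ending in `c`: if the last letter is wrong, flatten the prefix (`changes s j` flips), flip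
it, and rebuild the alternation from the right (`j` flips). -/
def altDist (s : ℕ → Fin 2) : ℕ → Fin 2 → ℕ
  | 0, _ => 0
  | j + 1, c => if s j = c then altDist s j (1 - c) else changes s j + 1 + j

theorem altDist_succ_of_ne {c : Fin 2} (h : s j ≠ c) :
    altDist s (j + 1) c = changes s j + 1 + j := by
  simp [altDist, h]

theorem altDist_succ_of_const {d c : Fin 2} (h : ∀ i ≤ j, s i = d) :
    altDist s (j + 1) c = if d = c then j else j + 1 := by
  rw [altDist, h j le_rfl, changes_eq_zero_of_const h]
  split_ifs with hdc
  · subst hdc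
    cases j with
    | zero => rfl
    | succ j =>
      have hd : s j ≠ 1 - d := by
        rw [h j (by omega)]
        exact Fin.ne_one_sub_self d
      rw [altDist_succ_of_ne hd, changes_eq_zero_of_const fun i hi => h i (by omega)]
      omega
  · omega

theorem altDist_succ_eq_zero {c : Fin 2} (halt : ∀ i < j, s i ≠ s (i + 1)) (hc : s j = c) :
    altDist s (j + 1) c = 0 := by
  induction j generalizing c with
  | zero => simp [altDist, hc]
  | succ j ih =>
    rw [altDist, if_pos hc]
    exact ih (fun i hi => halt i (by omega))
      (Fin.eq_one_sub_of_ne (hc ▸ halt j (by omega)))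

theorem altDist_le_altDist_add_one (h : IsPrefixFlip m s t) :
    ∀ j c, altDist s j c ≤ altDist t j c + 1
  | 0, _ => by simp [altDist]
  | j + 1, c => by
    rcases lt_or_ge m j with hmj | hjm
    · rw [altDist, altDist, h.2.2 j hmj]
      split_ifs
      · exact altDist_le_altDist_add_one h j (1 - c)
      · have := changes_le_changes_add_one h (j := j)
        omega
    · rw [altDist_succ_of_const fun i hi => (h.1 i (hi.trans hjm)).1,
        altDist_succ_of_const fun i hi => (h.1 i (hi.trans hjm)).2]
      split_ifs with hs ht
      · exact absurd (hs.trans ht.symm) h.2.1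
      all_goals omega

end AltDist

section Graph

variable {k : ℕ}

/-- Padding by `0` matches the convention `x_{k+1} = 0` in the definition of `alt`. -/
def bits (z : Fin k → Fin 2) (i : ℕ) : Fin 2 := if h : i < k then z ⟨i, h⟩ else 0

theorem bits_fin (z : Fin k → Fin 2) (i : Fin k) : bits z i = z i := dif_pos i.isLt

theorem bits_of_le (z : Fin k → Fin 2) {i : ℕ} (h : k ≤ i) : bits z i = 0 := dif_neg (by omega)

theorem bits_injective : Function.Injective (bits (k := k)) := fun a b h =>
  funext fun i => (bits_fin a i).symm.trans ((congrFun h i).trans (bits_fin b i))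

theorem lt_of_bits_ne {a b : Fin k → Fin 2} {i : ℕ} (h : bits a i ≠ bits b i) : i < k := by
  by_contra hi
  exact h (by rw [bits_of_le a (not_lt.mp hi), bits_of_le b (not_lt.mp hi)])

theorem bits_eq_bits_of_lt {a b : Fin k → Fin 2} {m : ℕ}
    (h : ∀ i : Fin k, m < i.val → a i = b i) (i : ℕ) (hi : m < i) : bits a i = bits b i := by
  by_cases hik : i < k
  · exact (bits_fin a ⟨i, hik⟩).trans ((h _ hi).trans (bits_fin b _).symm)
  · rw [bits_of_le a (not_lt.mp hik), bits_of_le b (not_lt.mp hik)]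

theorem bits_eq_of_le {z : Fin k → Fin 2} {j : Fin k} {c : Fin 2}
    (h : ∀ i : Fin k, i.val ≤ j.val → z i = c) (i : ℕ) (hi : i ≤ j.val) : bits z i = c :=
  (bits_fin z ⟨i, by omega⟩).trans (h _ hi)

theorem isPrefixFlip_of_adj {a b : Fin k → Fin 2} (h : (hierGraph (fun _ => 2) k).Adj a b) :
    ∃ m, IsPrefixFlip m (bits a) (bits b) := by
  obtain ⟨hne, h1 | ⟨j, hj, hag⟩ | ⟨m, -, -, ha, hb, hab, -⟩⟩ := h
  · refine ⟨0, fun i hi => by obtain rfl := Nat.le_zero.mp hi; exact ⟨rfl, rfl⟩,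
      fun h0 => hne (bits_injective (funext fun i => ?_)), bits_eq_bits_of_lt h1⟩
    rcases Nat.eq_zero_or_pos i with rfl | hi
    · exact h0
    · exact bits_eq_bits_of_lt h1 i hi
  · have zero_of_val {z : Fin k → Fin 2} (hz : ∀ i : Fin k, i.val ≤ j.val → (z i).val = 0) :
        ∀ i ≤ j.val, bits z i = 0 :=
      bits_eq_of_le fun i hi => Fin.ext (hz i hi)
    have one_of_val {z : Fin k → Fin 2} (hz : ∀ i : Fin k, i.val ≤ j.val → (z i).val ≠ 0) :
        ∀ i ≤ j.val, bits z i = 1 :=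
      bits_eq_of_le fun i hi => Fin.eq_one_of_ne_zero _ fun h0 => hz i hi (by rw [h0]; rfl)
    refine ⟨j, ?_⟩
    rcases hj with ⟨ha, hb⟩ | ⟨hb, ha⟩
    · exact isPrefixFlip_of_const (zero_of_val ha) (one_of_val hb) (by decide)
        (bits_eq_bits_of_lt hag)
    · exact isPrefixFlip_of_const (one_of_val ha) (zero_of_val hb) (by decide)
        (bits_eq_bits_of_lt hag)
  · exact absurd (by omega : a m = b m) hab

theorem adj_of_isPrefixFlip {a b : Fin k → Fin 2} {m : ℕ} (h : IsPrefixFlip m (bits a) (bits b)) :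
    (hierGraph (fun _ => 2) k).Adj a b := by
  have hm := lt_of_bits_ne h.2.1
  have hpre (i : Fin k) (hi : i.val ≤ m) : a i = bits a m ∧ b i = bits b m := by
    rw [← bits_fin a, ← bits_fin b]
    exact h.1 i hi
  have hne : bits a m ≠ bits b m := h.2.1
  refine ⟨fun e => hne (by rw [e]), Or.inr (Or.inl ⟨⟨m, hm⟩, ?_, fun i hi => ?_⟩)⟩
  · by_cases ha : bits a m = 0
    · have hb : bits b m = 1 := Fin.eq_one_of_ne_zero _ (ha ▸ hne.symm)
      exact Or.inl ⟨fun i hi => by rw [(hpre i hi).1, ha]; rfl,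
        fun i hi => by rw [(hpre i hi).2, hb]; simp⟩
    · have hb : bits b m = 0 := by
        rw [Fin.eq_one_sub_of_ne hne.symm, Fin.eq_one_of_ne_zero _ ha]; rfl
      exact Or.inr ⟨fun i hi => by rw [(hpre i hi).2, hb]; rfl,
        fun i hi => by rw [(hpre i hi).1]; simpa using ha⟩
  · rw [← bits_fin a, ← bits_fin b]
    exact h.2.2 i hi

theorem altDist_le_altDist_add_one_of_adj {a b : Fin k → Fin 2}
    (h : (hierGraph (fun _ => 2) k).Adj a b) (j : ℕ) (c : Fin 2) :
    altDist (bits a) j c ≤ altDist (bits b) j c + 1 := by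
  obtain ⟨m, hm⟩ := isPrefixFlip_of_adj h
  exact altDist_le_altDist_add_one hm j c

def flat (z : Fin k → Fin 2) (j : ℕ) : Fin k → Fin 2 := fun i => if i.val ≤ j then bits z j else z i

theorem bits_flat (z : Fin k → Fin 2) (j i : ℕ) :
    bits (flat z j) i = if i ≤ j then bits z j else bits z i := by
  by_cases hik : i < k
  · simp [bits, flat, hik]
  · rw [bits_of_le _ (not_lt.mp hik), bits_of_le _ (not_lt.mp hik)]
    split_ifs with hij
    · rw [bits_of_le z (by omega)]
    · rfl

theorem flat_zero (z : Fin k → Fin 2) : flat z 0 = z :=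
  bits_injective (funext fun i => by
    rw [bits_flat]
    split_ifs with hi
    · rw [Nat.le_zero.mp hi]
    · rfl)

theorem flat_flat (z : Fin k → Fin 2) {j j' : ℕ} (h : j ≤ j') : flat (flat z j') j = flat z j' :=
  bits_injective (funext fun i => by
    simp only [bits_flat, if_pos h]
    split_ifs <;> first | rfl | omega)

theorem edist_flat_flat_le {x y : Fin k → Fin 2} {j : ℕ} (hag : ∀ i, j < i → bits x i = bits y i) :
    (hierGraph (fun _ => 2) k).edist (flat x j) (flat y j) ≤
      if bits x j = bits y j then 0 else 1 := by
  have hag' (i : ℕ) (hi : j < i) : bits (flat x j) i = bits (flat y j) i := by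
    rw [bits_flat, bits_flat, if_neg (by omega), if_neg (by omega)]
    exact hag i hi
  split_ifs with hxy
  · have : flat x j = flat y j := bits_injective (funext fun i => by
      rcases le_or_gt i j with hi | hi
      · rw [bits_flat, bits_flat, if_pos hi, if_pos hi, hxy]
      · exact hag' i hi)
    rw [this, edist_self]
  · refine edist_le_one_iff_adj_or_eq.mpr (Or.inl (adj_of_isPrefixFlip (m := j) ?_))
    exact isPrefixFlip_of_const (fun i hi => by rw [bits_flat, if_pos hi])
      (fun i hi => by rw [bits_flat, if_pos hi]) hxy hag'

theorem edist_flat_le (z : Fin k → Fin 2) :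
    ∀ j, (hierGraph (fun _ => 2) k).edist z (flat z j) ≤ changes (bits z) j
  | 0 => by rw [flat_zero, edist_self]; exact zero_le
  | j + 1 => by
    have hag (i : ℕ) (hi : j < i) : bits z i = bits (flat z (j + 1)) i := by
      rw [bits_flat]
      split_ifs with h
      · rw [show i = j + 1 by omega]
      · rfl
    calc (hierGraph (fun _ => 2) k).edist z (flat z (j + 1))
        ≤ (hierGraph (fun _ => 2) k).edist z (flat z j) +
            (hierGraph (fun _ => 2) k).edist (flat z j) (flat (flat z (j + 1)) j) := by
          rw [flat_flat z j.le_succ]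
          exact SimpleGraph.edist_triangle
      _ ≤ changes (bits z) j + if bits z j = bits (flat z (j + 1)) j then 0 else 1 :=
          add_le_add (edist_flat_le z j) ((edist_flat_flat_le hag).trans (by split_ifs <;> simp))
      _ = changes (bits z) (j + 1) := by
          rw [changes_succ, bits_flat, if_pos j.le_succ]
          split_ifs <;> simp

theorem edist_le_changes_add {x y : Fin k → Fin 2} {j : ℕ}
    (hag : ∀ i, j < i → bits x i = bits y i) :
    (hierGraph (fun _ => 2) k).edist x y ≤ ↑(changes (bits x) j + 1 + j) := by
  set G := hierGraph (fun _ => 2) k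
  have hmid : G.edist (flat x j) (flat y j) ≤ 1 :=
    (edist_flat_flat_le hag).trans (by split_ifs <;> simp)
  have hright : G.edist (flat y j) y ≤ changes (bits y) j := by
    rw [SimpleGraph.edist_comm]
    exact edist_flat_le y j
  calc G.edist x y ≤ G.edist x (flat x j) + G.edist (flat x j) (flat y j) + G.edist (flat y j) y :=
        SimpleGraph.edist_triangle.trans (add_le_add_left SimpleGraph.edist_triangle _)
    _ ≤ changes (bits x) j + 1 + changes (bits y) j := by
        gcongr
        exact edist_flat_le x j
    _ ≤ ↑(changes (bits x) j + 1 + j) := by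
        have := changes_le (bits y) j
        norm_cast
        omega

theorem edist_le_changes_add_length (hk : 1 ≤ k) (x y : Fin k → Fin 2) :
    (hierGraph (fun _ => 2) k).edist x y ≤ ↑(changes (bits x) (k - 1) + k) := by
  have := edist_le_changes_add (x := x) (y := y) (j := k - 1) fun i hi => by
    rw [bits_of_le x (by omega), bits_of_le y (by omega)]
  rwa [show changes (bits x) (k - 1) + 1 + (k - 1) = changes (bits x) (k - 1) + k by omega] at this

def alternating (k : ℕ) : Fin k → Fin 2 := fun i => ⟨(k - 1 - i) % 2, Nat.mod_lt _ two_pos⟩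

theorem altDist_alternating (hk : 1 ≤ k) : altDist (bits (alternating k)) k 0 = 0 := by
  obtain ⟨n, rfl⟩ : ∃ n, k = n + 1 := ⟨k - 1, by omega⟩
  refine altDist_succ_eq_zero (fun i hi => ?_) (by simp [bits, alternating])
  simp only [bits, alternating, dif_pos (show i < n + 1 by omega),
    dif_pos (show i + 1 < n + 1 by omega), ne_eq, Fin.mk.injEq]
  omega

theorem changes_add_length_le_dist (hk : 1 ≤ k) {x : Fin k → Fin 2} (hx : bits x (k - 1) = 1) :
    changes (bits x) (k - 1) + k ≤ (hierGraph (fun _ => 2) k).dist x (alternating k) := by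
  have hreach : (hierGraph (fun _ => 2) k).Reachable x (alternating k) :=
    reachable_of_edist_ne_top (ne_top_of_le_ne_top (by simp) (edist_le_changes_add_length hk _ _))
  have hx' : altDist (bits x) k 0 = changes (bits x) (k - 1) + k := by
    obtain ⟨n, rfl⟩ : ∃ n, k = n + 1 := ⟨k - 1, by omega⟩
    rw [Nat.add_sub_cancel] at hx ⊢
    rw [altDist_succ_of_ne (by rw [hx]; decide)]
    omega
  have := hreach.apply_le_apply_add_dist (fun u v h => altDist_le_altDist_add_one_of_adj h k 0)
  rwa [hx', altDist_alternating hk, zero_add] at this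

theorem extVal_two (z : Fin k → Fin 2) (i : ℕ) : extVal (fun _ => 2) k z i = (bits z i).val := by
  unfold extVal bits
  split_ifs <;> rfl

theorem altNum_two (z : Fin k → Fin 2) : altNum (fun _ => 2) k z = changes (bits z) k := by
  unfold altNum changes
  congr 1
  refine filter_congr fun i _ => ?_
  rw [extVal_two, extVal_two]
  generalize bits z i = a
  generalize bits z (i + 1) = b
  revert a b
  decide

theorem bits_one_sub (z : Fin k → Fin 2) {i : ℕ} (hi : i < k) :
    bits (fun j => 1 - z j) i = 1 - bits z i := by
  simp [bits, hi]

theorem altNum_one_sub (hk : 1 ≤ k) {x : Fin k → Fin 2} (hx : bits x (k - 1) = 1) :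
    altNum (fun _ => 2) k (fun i => 1 - x i) = changes (bits x) (k - 1) := by
  obtain ⟨n, rfl⟩ : ∃ n, k = n + 1 := ⟨k - 1, by omega⟩
  rw [altNum_two, changes_succ, bits_one_sub x (by omega), bits_of_le _ le_rfl]
  simp only [Nat.add_sub_cancel] at hx ⊢
  rw [hx, sub_self, if_pos rfl, add_zero]
  unfold changes
  refine congrArg card (filter_congr fun i hi => ?_)
  rw [mem_range] at hi
  rw [bits_one_sub x (by omega), bits_one_sub x (by omega), Ne, Ne, sub_right_inj]

end Graph

end BinaryHierGraph

/-- In the binomial tree `H_{2,…,2}` (k copies of 2), if `x_k = 1` then the eccentricity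
of `x` equals `alt(x̄) + k`, where `x̄` interchanges 0's and 1's. -/
theorem stmt_9 (k : ℕ) (hk : 1 ≤ k) (x : ∀ i : Fin k, Fin 2)
    (hxk : (x ⟨k - 1, by omega⟩).val = 1) :
    (Finset.univ.sup fun y : ∀ i : Fin k, Fin 2 =>
        (hierGraph (fun _ => 2) k).dist x y) =
      altNum (fun _ => 2) k (fun i => 1 - x i) + k := by
  have hx : BinaryHierGraph.bits x (k - 1) = 1 :=
    (BinaryHierGraph.bits_fin x ⟨k - 1, by omega⟩).trans (Fin.ext hxk)
  rw [BinaryHierGraph.altNum_one_sub hk hx]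
  refine le_antisymm (Finset.sup_le fun y _ => ENat.toNat_le_of_le_natCast
    (BinaryHierGraph.edist_le_changes_add_length hk x y)) ?_
  exact (BinaryHierGraph.changes_add_length_le_dist hk hx).trans
    (Finset.le_sup (f := fun y => (hierGraph (fun _ => 2) k).dist x y) (Finset.mem_univ _))
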